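/- arXiv:2210.01888 — 4 statements merged into one kernel-verified Lean document; each statement's English description precedes it below -/
import Mathlib

section
/- Let 𝓒 be a finite set of points in a metric space with distance d, and let φ, λ : 𝓒 → ℝ be nonnegative functions that are compatible, i.e. for all j, k ∈ 𝓒, φ(j) ≤ φ(k) implies λ(j) ≤ λ(k). Then there exist a subset C ⊆ 𝓒 and a map ctr : 𝓒 → C such that: (i) ctr(j) = j for every j ∈ C; (ii) for all distinct j, j' ∈ C, d(j,j') > 2·max(λ(j), λ(j')); (iii) for every k ∈ 𝓒, φ(ctr(k)) ≤ φ(k) and λ(ctr(k)) ≤ λ(k); and (iv) for every k ∈ 𝓒, d(ctr(k), k) ≤ 2·λ(k). -/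
open Classical in
private lemma filter_aux {X : Type*} [MetricSpace X] (𝓒 : Finset X) :
    ∀ (φ lam : X → ℝ),
    (∀ j ∈ 𝓒, 0 ≤ lam j) →
    (∀ j ∈ 𝓒, ∀ k ∈ 𝓒, φ j ≤ φ k → lam j ≤ lam k) →
    ∃ (C : Finset X) (ctr : X → X), C ⊆ 𝓒 ∧
      (∀ k ∈ 𝓒, ctr k ∈ C) ∧
      (∀ j ∈ C, ctr j = j) ∧
      (∀ j ∈ C, ∀ j' ∈ C, j ≠ j' → dist j j' > 2 * max (lam j) (lam j')) ∧
      (∀ k ∈ 𝓒, φ (ctr k) ≤ φ k ∧ lam (ctr k) ≤ lam k) ∧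
      (∀ k ∈ 𝓒, dist (ctr k) k ≤ 2 * lam k) := by
  induction 𝓒 using Finset.strongInduction with
  | _ 𝓒 ih =>
    intro φ lam hlam hcompat
    rcases 𝓒.eq_empty_or_nonempty with rfl | hne
    · exact ⟨∅, id, by simp⟩
    · obtain ⟨j, hj, hjmin⟩ := 𝓒.exists_min_image φ hne
      classical
      set B : Finset X := 𝓒.filter (fun k => dist j k ≤ 2 * lam k) with hB
      have hjB : j ∈ B := by
        simp only [hB, Finset.mem_filter]
        refine ⟨hj, ?_⟩
        rw [dist_self]
        nlinarith [hlam j hj]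
      have hsub : 𝓒 \ B ⊂ 𝓒 := by
        refine Finset.ssubset_iff_of_subset (Finset.sdiff_subset) |>.mpr ?_
        exact ⟨j, hj, by simp [hjB]⟩
      obtain ⟨C', ctr', hC'sub, hmem', hid', hsep', hval', hdist'⟩ :=
        ih (𝓒 \ B) hsub φ lam
          (fun k hk => hlam k (Finset.mem_sdiff.mp hk).1)
          (fun a ha b hb h => hcompat a (Finset.mem_sdiff.mp ha).1 b (Finset.mem_sdiff.mp hb).1 h)
      have hC'𝓒 : ∀ x ∈ C', x ∈ 𝓒 \ B := fun x hx => hC'sub hx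
      refine ⟨insert j C', fun k => if dist j k ≤ 2 * lam k then j else ctr' k,
        ?_, ?_, ?_, ?_, ?_, ?_⟩
      · intro x hx'
        rcases Finset.mem_insert.mp hx' with rfl | hx
        · exact hj
        · exact (Finset.mem_sdiff.mp (hC'𝓒 x hx)).1
      · intro k hk
        by_cases h : dist j k ≤ 2 * lam k
        · simp only [if_pos h]; exact Finset.mem_insert_self _ _
        · simp only [if_neg h]
          exact Finset.mem_insert_of_mem (hmem' k (Finset.mem_sdiff.mpr ⟨hk, by simp [hB, h]⟩))
      · intro x hx'
        rcases Finset.mem_insert.mp hx' with rfl | hx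
        · have : dist x x ≤ 2 * lam x := by rw [dist_self]; nlinarith [hlam x hj]
          simp only [if_pos this]
        · have hxB : x ∉ B := (Finset.mem_sdiff.mp (hC'𝓒 x hx)).2
          have hx𝓒 : x ∈ 𝓒 := (Finset.mem_sdiff.mp (hC'𝓒 x hx)).1
          have h : ¬ dist j x ≤ 2 * lam x := by
            intro h; exact hxB (Finset.mem_filter.mpr ⟨hx𝓒, h⟩)
          simp only [if_neg h]
          exact hid' x hx
      · intro a ha b hb hab
        have key : ∀ y ∈ C', dist j y > 2 * max (lam j) (lam y) := by
          intro y hy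
          have hy𝓒 : y ∈ 𝓒 := (Finset.mem_sdiff.mp (hC'𝓒 y hy)).1
          have hyB : y ∉ B := (Finset.mem_sdiff.mp (hC'𝓒 y hy)).2
          have h : ¬ dist j y ≤ 2 * lam y := by
            intro h; exact hyB (Finset.mem_filter.mpr ⟨hy𝓒, h⟩)
          have hlj : lam j ≤ lam y := hcompat j hj y hy𝓒 (hjmin y hy𝓒)
          have : max (lam j) (lam y) = lam y := max_eq_right hlj
          rw [this]
          linarith [not_le.mp h]
        rcases Finset.mem_insert.mp ha with ha1 | ha2
        · rcases Finset.mem_insert.mp hb with hb1 | hb2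
          · exact absurd (ha1.trans hb1.symm) hab
          · rw [ha1]; exact key b hb2
        · rcases Finset.mem_insert.mp hb with hb1 | hb2
          · rw [hb1, dist_comm, max_comm]; exact key a ha2
          · exact hsep' a ha2 b hb2 hab
      · intro k hk
        by_cases h : dist j k ≤ 2 * lam k
        · simp only [if_pos h]
          exact ⟨hjmin k hk, hcompat j hj k hk (hjmin k hk)⟩
        · simp only [if_neg h]
          exact hval' k (Finset.mem_sdiff.mpr ⟨hk, by simp [hB, hk, h]⟩)
      · intro k hk
        by_cases h : dist j k ≤ 2 * lam k
        · simp only [if_pos h]; exact h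
        · simp only [if_neg h]
          exact hdist' k (Finset.mem_sdiff.mpr ⟨hk, by simp [hB, hk, h]⟩)

/-- The guarantees of the filtering procedure: given a finite set of clients `𝓒` in a
metric space and compatible nonnegative functions `φ, λ`, there is a set of cluster
centers `C ⊆ 𝓒` and an assignment `ctr` of clients to centers such that centers are
their own centers, centers are well-separated, each client's center has smaller `φ` and
`λ` values, and each client is within `2·λ` of its center. -/
theorem stmt_0 {X : Type*} [MetricSpace X] (𝓒 : Finset X) (φ lam : X → ℝ)
    (hφ : ∀ j ∈ 𝓒, 0 ≤ φ j) (hlam : ∀ j ∈ 𝓒, 0 ≤ lam j)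
    (hcompat : ∀ j ∈ 𝓒, ∀ k ∈ 𝓒, φ j ≤ φ k → lam j ≤ lam k) :
    ∃ (C : Finset X) (ctr : X → X), C ⊆ 𝓒 ∧
      (∀ k ∈ 𝓒, ctr k ∈ C) ∧
      (∀ j ∈ C, ctr j = j) ∧
      (∀ j ∈ C, ∀ j' ∈ C, j ≠ j' → dist j j' > 2 * max (lam j) (lam j')) ∧
      (∀ k ∈ 𝓒, φ (ctr k) ≤ φ k ∧ lam (ctr k) ≤ lam k) ∧
      (∀ k ∈ 𝓒, dist (ctr k) k ≤ 2 * lam k) := by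
  exact filter_aux 𝓒 φ lam hlam hcompat
end

section
/- Let M be a matroid with rank function rk on a finite ground set 𝓕. Let C be a finite index set with a subset C_s ⊆ C. For each j ∈ C let F'_j ⊆ G_j ⊆ 𝓕, and for each j ∈ C_s let B_j ⊆ G_j be a set satisfying F'_j ⊆ B_j or B_j ⊆ F'_j; assume the sets {G_j : j ∈ C} are pairwise disjoint. Define the polytope Q = { v : 𝓕 → ℝ | v_i ≥ 0 for all i; Σ_{i∈S} v_i ≤ rk(S) for all S ⊆ 𝓕; Σ_{i∈F'_j} v_i ≥ 1/2 and Σ_{i∈G_j} v_i ≤ 1 for all j ∈ C; Σ_{i∈B_j} v_i = 1 for all j ∈ C_s }. Then every extreme point v of Q is half-integral, i.e. 2·v_i ∈ ℤ for every i ∈ 𝓕. -/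
/-!
By submodularity the tight rank constraints at `v` are closed under intersection, and the tight
cluster constraints (with the tight constraints `v i ≥ 0`) form a laminar family; all their
`v`-sums are half-integral. Each family is cut into its atoms, which keep half-integral sums
because an atom is `M \ (M ∩ ⋃ Tₖ)` with `M` and every `M ∩ Tₖ` in the family. For two
partitions, sums in an additive subgroup `Λ` are realised by a vector with entries in `Λ`: each
block meets the coordinates outside `Λ` in zero or at least two places, so there are fewer
independent block constraints than such coordinates, and a move in their common kernel sends one
coordinate to `0`. The resulting half-integral `y` keeps every tight constraint of `v` tight, so
`v ± ε (v - y) ∈ Q` for small `ε`, and extremality forces `v = y`.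
-/

open Finset Filter Topology

namespace Finset

variable {α : Type*} [DecidableEq α]

def IsPiSystem (𝒰 : Finset (Finset α)) : Prop :=
  ∀ S ∈ 𝒰, ∀ T ∈ 𝒰, (S ∩ T).Nonempty → S ∩ T ∈ 𝒰

theorem isPiSystem_of_laminar {𝒰 : Finset (Finset α)}
    (h : ∀ S ∈ 𝒰, ∀ T ∈ 𝒰, S ⊆ T ∨ T ⊆ S ∨ Disjoint S T) : 𝒰.IsPiSystem := by
  intro S hS T hT hST
  rcases h S hS T hT with h | h | h
  · rwa [inter_eq_left.2 h]
  · rwa [inter_eq_right.2 h]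
  · exact absurd (disjoint_iff_inter_eq_empty.1 h) hST.ne_empty

theorem IsPiSystem.exists_mem_forall_mem_iff {𝒰 : Finset (Finset α)} (h𝒰 : 𝒰.IsPiSystem)
    {𝒯 : Finset (Finset α)} (h𝒯 : 𝒯 ⊆ 𝒰) (hne : 𝒯.Nonempty) {i : α} (hi : ∀ S ∈ 𝒯, i ∈ S) :
    ∃ M ∈ 𝒰, ∀ j, j ∈ M ↔ ∀ S ∈ 𝒯, j ∈ S := by
  induction hne using Finset.Nonempty.cons_induction with
  | singleton S => exact ⟨S, h𝒯 (mem_singleton_self S), by simp⟩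
  | cons S 𝒯 _ _ ih =>
    obtain ⟨M, hM, hMiff⟩ := ih ((subset_cons _).trans h𝒯) fun T hT => hi T (mem_cons_of_mem hT)
    have hiS := hi S (mem_cons_self S 𝒯)
    refine ⟨S ∩ M, h𝒰 S (h𝒯 (mem_cons_self S 𝒯)) M hM ⟨i, mem_inter.2 ⟨hiS, ?_⟩⟩, ?_⟩
    · exact (hMiff i).2 fun T hT => hi T (mem_cons_of_mem hT)
    · simp [hMiff]

section AddSubgroup

variable {G : Type*} [AddCommGroup G] {Λ : AddSubgroup G} {x : α → G} {𝒰 : Finset (Finset α)}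

theorem IsPiSystem.sum_inter_sup_mem (h𝒰 : 𝒰.IsPiSystem) (hx : ∀ S ∈ 𝒰, ∑ i ∈ S, x i ∈ Λ)
    {𝒯 : Finset (Finset α)} (h𝒯 : 𝒯 ⊆ 𝒰) : ∀ M ∈ 𝒰, ∑ i ∈ M ∩ 𝒯.sup id, x i ∈ Λ := by
  induction 𝒯 using Finset.induction_on with
  | empty => simp
  | insert S 𝒯 _ ih =>
    intro M hM
    have ih := ih ((subset_insert S 𝒯).trans h𝒯)
    rw [sup_insert, id, sup_eq_union, inter_union_distrib_left]
    by_cases hMS : (M ∩ S).Nonempty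
    · have hMS𝒰 := h𝒰 M hM S (h𝒯 (mem_insert_self S 𝒯)) hMS
      have key := sum_union_inter (s₁ := M ∩ S) (s₂ := M ∩ 𝒯.sup id) (f := x)
      have hinter : M ∩ S ∩ (M ∩ 𝒯.sup id) = M ∩ S ∩ 𝒯.sup id := by
        rw [inter_left_comm, ← inter_assoc, inter_left_idem]
      rw [hinter] at key
      rw [eq_sub_of_add_eq key]
      exact sub_mem (add_mem (hx _ hMS𝒰) (ih M hM)) (ih _ hMS𝒰)
    · rw [not_nonempty_iff_eq_empty.1 hMS, empty_union]
      exact ih M hM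

theorem IsPiSystem.sum_mem_of_mem_atomise (h𝒰 : 𝒰.IsPiSystem)
    (hx : ∀ S ∈ 𝒰, ∑ i ∈ S, x i ∈ Λ) {u : Finset α}
    (hu : u ∈ (Finpartition.atomise (𝒰.sup id) 𝒰).parts) : ∑ i ∈ u, x i ∈ Λ := by
  obtain ⟨⟨i, hiu⟩, Q, -, rfl⟩ := Finpartition.mem_atomise.1 hu
  have hi := (mem_filter.1 hiu)
  obtain ⟨S₀, hS₀, hiS₀⟩ := mem_sup.1 hi.1
  obtain ⟨M, hM, hMiff⟩ := h𝒰.exists_mem_forall_mem_iff (filter_subset (i ∈ ·) 𝒰)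
    ⟨S₀, mem_filter.2 ⟨hS₀, hiS₀⟩⟩ (fun S hS => (mem_filter.1 hS).2)
  have hatom : {j ∈ 𝒰.sup id | ∀ S ∈ 𝒰, S ∈ Q ↔ j ∈ S} = M \ (M ∩ {S ∈ 𝒰 | i ∉ S}.sup id) := by
    ext j
    simp +contextual only [mem_filter, mem_sdiff, mem_inter, mem_sup, hMiff, id, hi.2]
    grind
  rw [hatom, sum_sdiff_eq_sub inter_subset_left]
  exact sub_mem (hx M hM) (h𝒰.sum_inter_sup_mem hx (filter_subset _ _) M hM)

end AddSubgroup

theorem exists_ne_zero_sum_eq_zero_of_card_lt {K : Type*} [Field K]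
    (𝒮 : Finset (Finset α)) {N : Finset α} (h : #𝒮 < #N) :
    ∃ d : α → K, (∀ i ∉ N, d i = 0) ∧ (∃ i, d i ≠ 0) ∧ ∀ S ∈ 𝒮, ∑ i ∈ S, d i = 0 := by
  let c : α → 𝒮 → K := fun i S => if i ∈ (S : Finset α) then 1 else 0
  have hdep : ¬LinearIndepOn K c (N : Set α) := fun hind => by
    have := hind.fintype_card_le_finrank
    simp only [Module.finrank_fintype_fun_eq_card, Fintype.card_coe, coe_sort_coe] at this
    omega
  obtain ⟨f, hf, i, hiN, hfi⟩ := not_linearIndepOn_finset_iff.1 hdep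
  refine ⟨fun i => if i ∈ N then f i else 0, fun i hi => if_neg hi, ⟨i, by simpa [hiN]⟩,
    fun S hS => ?_⟩
  have := congrFun hf ⟨S, hS⟩
  simp only [Finset.sum_apply, Pi.smul_apply, smul_eq_mul, mul_ite, mul_one, mul_zero, c,
    Pi.zero_apply] at this
  rw [sum_ite_mem, inter_comm]
  rwa [sum_ite_mem] at this

theorem two_mul_card_filter_add_card_sdiff_le {P : Finset (Finset α)}
    (hP : (P : Set (Finset α)).PairwiseDisjoint id) {N : Finset α}
    (h : ∀ S ∈ P, #(S ∩ N) ≠ 1) : 2 * #{S ∈ P | (S ∩ N).Nonempty} + #(N \ P.sup id) ≤ #N := by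
  have hcover : #(N ∩ P.sup id) = ∑ S ∈ P, #(S ∩ N) := by
    rw [← card_biUnion (t := (· ∩ N)) (hP.mono_on fun S _ => inter_subset_left)]
    congr 1
    ext i
    simp only [mem_inter, mem_sup, mem_biUnion, id]
    tauto
  have htwo : 2 * #{S ∈ P | (S ∩ N).Nonempty} ≤ ∑ S ∈ P, #(S ∩ N) := by
    rw [mul_comm, ← smul_eq_mul, ← sum_const]
    refine (sum_le_sum fun S hS => ?_).trans (sum_le_sum_of_subset (filter_subset _ P))
    have := (mem_filter.1 hS).2.card_pos
    have := h S (mem_filter.1 hS).1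
    omega
  have := card_sdiff_add_card_inter N (P.sup id)
  omega

theorem sum_sum_eq_sum_of_subset_sup {M : Type*} [AddCommMonoid M] {P : Finset (Finset α)}
    (hP : (P : Set (Finset α)).PairwiseDisjoint id) {N : Finset α} (hN : N ⊆ P.sup id)
    {d : α → M} (hd : ∀ i ∉ N, d i = 0) : ∑ S ∈ P, ∑ i ∈ S, d i = ∑ i ∈ N, d i := by
  refine (sum_biUnion hP).symm.trans ?_
  rw [← sup_eq_biUnion]
  exact (sum_subset hN fun i _ hi => hd i hi).symm

theorem sum_eq_zero_of_inter_nonempty_imp_mem {M : Type*} [AddCommMonoid M]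
    {N : Finset α} {𝒮 : Finset (Finset α)} {d : α → M} (hd : ∀ i ∉ N, d i = 0)
    (h𝒮 : ∀ S ∈ 𝒮, ∑ i ∈ S, d i = 0) {S : Finset α} (hS : (S ∩ N).Nonempty → S ∈ 𝒮) :
    ∑ i ∈ S, d i = 0 := by
  by_cases hSN : (S ∩ N).Nonempty
  · exact h𝒮 S (hS hSN)
  · exact sum_eq_zero fun i hi => hd i fun hiN => hSN ⟨i, mem_inter.2 ⟨hi, hiN⟩⟩

/-- When `P` and `R` both cover `N`, the `P`-constraints and the `R`-constraints have the same
sum, so one of them may be dropped. -/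
theorem exists_ne_zero_sum_eq_zero_of_subset_sup {K : Type*} [Field K]
    {P R : Finset (Finset α)} (hP : (P : Set (Finset α)).PairwiseDisjoint id)
    (hR : (R : Set (Finset α)).PairwiseDisjoint id) {N : Finset α} (hN : N.Nonempty)
    (hNP : N ⊆ P.sup id) (hNR : N ⊆ R.sup id) (hcP : 2 * #{S ∈ P | (S ∩ N).Nonempty} ≤ #N)
    (hcR : 2 * #{S ∈ R | (S ∩ N).Nonempty} ≤ #N) :
    ∃ d : α → K, (∀ i ∉ N, d i = 0) ∧ (∃ i, d i ≠ 0) ∧ ∀ S ∈ P ∪ R, ∑ i ∈ S, d i = 0 := by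
  set P' := {S ∈ P | (S ∩ N).Nonempty}
  set R' := {S ∈ R | (S ∩ N).Nonempty}
  obtain ⟨i, hi⟩ := hN
  obtain ⟨S₀, hS₀, hiS₀⟩ := mem_sup.1 (hNP hi)
  have hS₀' : S₀ ∈ P' := mem_filter.2 ⟨hS₀, i, mem_inter.2 ⟨hiS₀, hi⟩⟩
  have hcard : #(P'.erase S₀ ∪ R') < #N := by
    have := card_union_le (P'.erase S₀) R'
    have := card_erase_of_mem hS₀'
    have := card_pos.2 ⟨S₀, hS₀'⟩
    omega
  obtain ⟨d, hd, hne, hd'⟩ := exists_ne_zero_sum_eq_zero_of_card_lt (K := K) _ hcard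
  have hR0 : ∀ S ∈ R, ∑ i ∈ S, d i = 0 := fun S hS =>
    sum_eq_zero_of_inter_nonempty_imp_mem hd hd' fun hSN => by simp [R', hS, hSN]
  have hP0 : ∀ S ∈ P.erase S₀, ∑ i ∈ S, d i = 0 := fun S hS =>
    sum_eq_zero_of_inter_nonempty_imp_mem hd hd' fun hSN => by
      simp [P', mem_of_mem_erase hS, hSN, ne_of_mem_erase hS]
  have hS₀0 : ∑ i ∈ S₀, d i = 0 := by
    have hPR := (sum_sum_eq_sum_of_subset_sup hP hNP hd).trans
      (sum_sum_eq_sum_of_subset_sup hR hNR hd).symm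
    rwa [← add_sum_erase P _ hS₀, sum_eq_zero hP0, sum_eq_zero hR0, add_zero] at hPR
  refine ⟨d, hd, hne, fun S hS => ?_⟩
  rcases mem_union.1 hS with hS | hS
  · rcases eq_or_ne S S₀ with rfl | hSS₀
    exacts [hS₀0, hP0 S (mem_erase.2 ⟨hSS₀, hS⟩)]
  · exact hR0 S hS

theorem exists_ne_zero_sum_eq_zero_of_pairwiseDisjoint {K : Type*} [Field K]
    {P R : Finset (Finset α)} (hP : (P : Set (Finset α)).PairwiseDisjoint id)
    (hR : (R : Set (Finset α)).PairwiseDisjoint id) {N : Finset α} (hN : N.Nonempty)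
    (h : ∀ S ∈ P ∪ R, #(S ∩ N) ≠ 1) :
    ∃ d : α → K, (∀ i ∉ N, d i = 0) ∧ (∃ i, d i ≠ 0) ∧ ∀ S ∈ P ∪ R, ∑ i ∈ S, d i = 0 := by
  have hcP := two_mul_card_filter_add_card_sdiff_le hP fun S hS => h S (mem_union_left R hS)
  have hcR := two_mul_card_filter_add_card_sdiff_le hR fun S hS => h S (mem_union_right P hS)
  by_cases hcov : N ⊆ P.sup id ∧ N ⊆ R.sup id
  · exact exists_ne_zero_sum_eq_zero_of_subset_sup hP hR hN hcov.1 hcov.2 (by omega) (by omega)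
  set P' := {S ∈ P | (S ∩ N).Nonempty}
  set R' := {S ∈ R | (S ∩ N).Nonempty}
  have hcard : #(P' ∪ R') < #N := by
    have := card_union_le P' R'
    have : 0 < #(N \ P.sup id) + #(N \ R.sup id) := by
      simp only [not_and_or, ← sdiff_nonempty, ← card_pos] at hcov
      omega
    omega
  obtain ⟨d, hd, hne, hd'⟩ := exists_ne_zero_sum_eq_zero_of_card_lt (K := K) _ hcard
  refine ⟨d, hd, hne, fun S hS => sum_eq_zero_of_inter_nonempty_imp_mem hd hd' fun hSN => ?_⟩
  rcases mem_union.1 hS with hS | hS <;> simp [P', R', hS, hSN]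

theorem card_inter_ne_one_of_sum_mem {G : Type*} [AddCommGroup G] {Λ : AddSubgroup G}
    {x : α → G} {N S : Finset α} (hN : ∀ i, i ∈ N ↔ x i ∉ Λ) (hS : ∑ i ∈ S, x i ∈ Λ) :
    #(S ∩ N) ≠ 1 := fun h => by
  obtain ⟨i, hi⟩ := card_eq_one.1 h
  have hiS : i ∈ S ∩ N := hi ▸ mem_singleton_self i
  have hrest : ∑ j ∈ S.erase i, x j ∈ Λ := sum_mem fun j hj => by
    by_contra hjN
    have : j ∈ S ∩ N := mem_inter.2 ⟨mem_of_mem_erase hj, (hN j).2 hjN⟩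
    exact ne_of_mem_erase hj (mem_singleton.1 (hi ▸ this))
  have := sub_mem hS hrest
  rw [← add_sum_erase S x (mem_inter.1 hiS).1, add_sub_cancel_right] at this
  exact (hN i).1 (mem_inter.1 hiS).2 this

theorem exists_forall_mem_sum_eq_of_pairwiseDisjoint [Fintype α] {K : Type*} [Field K]
    (Λ : AddSubgroup K) {P R : Finset (Finset α)} (hP : (P : Set (Finset α)).PairwiseDisjoint id)
    (hR : (R : Set (Finset α)).PairwiseDisjoint id) {x : α → K}
    (hx : ∀ S ∈ P ∪ R, ∑ i ∈ S, x i ∈ Λ) :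
    ∃ y : α → K, (∀ i, y i ∈ Λ) ∧ ∀ S ∈ P ∪ R, ∑ i ∈ S, y i = ∑ i ∈ S, x i := by
  classical
  obtain ⟨n, hn⟩ : ∃ n, #{i | x i ∉ Λ} = n := ⟨_, rfl⟩
  induction n using Nat.strong_induction_on generalizing x with
  | _ n ih =>
  set N : Finset α := {i | x i ∉ Λ}
  rcases N.eq_empty_or_nonempty with hN | hN
  · refine ⟨x, fun i => ?_, fun _ _ => rfl⟩
    by_contra hi
    exact (eq_empty_iff_forall_notMem.1 hN) i (by simpa [N] using hi)
  have hN1 : ∀ S ∈ P ∪ R, #(S ∩ N) ≠ 1 := fun S hS =>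
    card_inter_ne_one_of_sum_mem (fun i => by simp [N]) (hx S hS)
  obtain ⟨d, hd, ⟨i₁, hi₁⟩, hd0⟩ :=
    exists_ne_zero_sum_eq_zero_of_pairwiseDisjoint (K := K) hP hR hN hN1
  -- the shift keeps every block sum and brings the coordinate `i₁` to `0 ∈ Λ`
  set x' := x - (x i₁ / d i₁) • d
  have hsum : ∀ S ∈ P ∪ R, ∑ i ∈ S, x' i = ∑ i ∈ S, x i := fun S hS => by
    simp [x', sum_sub_distrib, ← mul_sum, hd0 S hS]
  have hfewer : ({i | x' i ∉ Λ} : Finset α) ⊂ N := by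
    refine ssubset_iff_of_subset (fun i hi => ?_) |>.2 ⟨i₁, ?_, ?_⟩
    · by_contra hiN
      simp_all [x', N]
    · by_contra hi₁N
      exact hi₁ (hd i₁ hi₁N)
    · simp [x', hi₁]
  obtain ⟨y, hy, hyx⟩ :=
    ih _ ((card_lt_card hfewer).trans_eq hn) (fun S hS => hsum S hS ▸ hx S hS) rfl
  exact ⟨y, hy, fun S hS => (hyx S hS).trans (hsum S hS)⟩

theorem sum_eq_of_forall_mem_atomise {M : Type*} [AddCommMonoid M] {s : Finset α}
    {𝒰 : Finset (Finset α)} {x y : α → M}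
    (h : ∀ u ∈ (Finpartition.atomise s 𝒰).parts, ∑ i ∈ u, y i = ∑ i ∈ u, x i)
    {t : Finset α} (ht : t ∈ 𝒰) (hts : t ⊆ s) : ∑ i ∈ t, y i = ∑ i ∈ t, x i := by
  have hdisj := (Finpartition.atomise s 𝒰).disjoint.subset
    (coe_subset.2 (filter_subset (fun u => u ⊆ t ∧ u.Nonempty) _))
  rw [← Finpartition.biUnion_filter_atomise ht hts, sum_biUnion hdisj, sum_biUnion hdisj]
  exact sum_congr rfl fun u hu => h u (mem_filter.1 hu).1

theorem IsPiSystem.exists_forall_mem_sum_eq [Fintype α] {K : Type*} [Field K]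
    (Λ : AddSubgroup K) {𝒰 𝒱 : Finset (Finset α)} (h𝒰 : 𝒰.IsPiSystem) (h𝒱 : 𝒱.IsPiSystem)
    {x : α → K} (hx : ∀ S ∈ 𝒰 ∪ 𝒱, ∑ i ∈ S, x i ∈ Λ) :
    ∃ y : α → K, (∀ i, y i ∈ Λ) ∧ ∀ S ∈ 𝒰 ∪ 𝒱, ∑ i ∈ S, y i = ∑ i ∈ S, x i := by
  obtain ⟨y, hyΛ, hy⟩ := exists_forall_mem_sum_eq_of_pairwiseDisjoint Λ
    (Finpartition.atomise (𝒰.sup id) 𝒰).disjoint (Finpartition.atomise (𝒱.sup id) 𝒱).disjoint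
    (x := x) fun u hu => (mem_union.1 hu).elim
      (h𝒰.sum_mem_of_mem_atomise fun S hS => hx S (mem_union_left 𝒱 hS))
      (h𝒱.sum_mem_of_mem_atomise fun S hS => hx S (mem_union_right 𝒰 hS))
  refine ⟨y, hyΛ, fun S hS => (mem_union.1 hS).elim (fun hS => ?_) (fun hS => ?_)⟩
  · exact sum_eq_of_forall_mem_atomise (fun u hu => hy u (mem_union_left _ hu)) hS
      (le_sup (f := id) hS)
  · exact sum_eq_of_forall_mem_atomise (fun u hu => hy u (mem_union_right _ hu)) hS
      (le_sup (f := id) hS)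

end Finset

theorem eventually_add_mul_le {a b c : ℝ} (h : a ≤ c) (hb : a = c → b = 0) :
    ∀ᶠ ε in 𝓝 0, a + ε * b ≤ c := by
  rcases h.lt_or_eq with hlt | heq
  · have : Tendsto (fun ε : ℝ => a + ε * b) (𝓝 0) (𝓝 a) :=
      (by fun_prop : Continuous fun ε : ℝ => a + ε * b).tendsto' 0 a (by simp)
    exact (this.eventually (gt_mem_nhds hlt)).mono fun _ => le_of_lt
  · exact Eventually.of_forall fun ε => by simp [hb heq, heq]

theorem eventually_le_add_mul {a b c : ℝ} (h : c ≤ a) (hb : a = c → b = 0) :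
    ∀ᶠ ε in 𝓝 0, c ≤ a + ε * b :=
  (eventually_add_mul_le (b := -b) (neg_le_neg h) fun h' => by simp [hb (neg_inj.1 h')]).mono
    fun ε hε => by linarith

theorem eq_zero_of_mem_extremePoints_of_eventually {E : Type*} [AddCommGroup E] [Module ℝ E]
    {A : Set E} {v d : E} (hv : v ∈ A.extremePoints ℝ) (hd : ∀ᶠ ε in 𝓝 (0 : ℝ), v + ε • d ∈ A) :
    d = 0 := by
  obtain ⟨δ, hδ, hball⟩ := Metric.eventually_nhds_iff.1 hd
  have hmem : ∀ ε : ℝ, |ε| < δ → v + ε • d ∈ A := fun ε hε => hball (by simpa using hε)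
  have h₁ := hmem (δ / 2) (by rw [abs_of_pos (by positivity)]; linarith)
  have h₂ := hmem (-(δ / 2)) (by rw [abs_neg, abs_of_pos (by positivity)]; linarith)
  have hseg : v ∈ openSegment ℝ (v + (δ / 2) • d) (v + (-(δ / 2)) • d) :=
    ⟨1 / 2, 1 / 2, by norm_num, by norm_num, by norm_num, by
      simp only [smul_add, smul_smul, neg_smul, smul_neg]; module⟩
  have := (mem_extremePoints.1 hv).2 _ h₁ _ h₂ hseg
  simpa [hδ.ne'] using this.1

section ClusterPolytope

variable {α β : Type*} [Fintype α] [DecidableEq α]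

def clusterPolytope (rk : Finset α → ℕ) (C Cs : Finset β) (F' G B : β → Finset α) :
    Set (α → ℝ) :=
  {v | (∀ i, 0 ≤ v i) ∧ (∀ S : Finset α, ∑ i ∈ S, v i ≤ (rk S : ℝ)) ∧
    (∀ j ∈ C, (1 : ℝ) / 2 ≤ ∑ i ∈ F' j, v i ∧ ∑ i ∈ G j, v i ≤ 1) ∧
    (∀ j ∈ Cs, ∑ i ∈ B j, v i = 1)}

noncomputable def tightRankSets (rk : Finset α → ℕ) (v : α → ℝ) : Finset (Finset α) :=
  {S | ∑ i ∈ S, v i = rk S}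

noncomputable def tightClusterSets (C Cs : Finset β) (F' G B : β → Finset α) (v : α → ℝ) :
    Finset (Finset α) :=
  {j ∈ C | ∑ i ∈ F' j, v i = 1 / 2}.image F' ∪ {j ∈ C | ∑ i ∈ G j, v i = 1}.image G ∪
    Cs.image B ∪ ({i | v i = 0} : Finset α).image singleton

theorem mem_tightClusterSets {C Cs : Finset β} {F' G B : β → Finset α} {v : α → ℝ}
    {S : Finset α} : S ∈ tightClusterSets C Cs F' G B v ↔
      (∃ j ∈ C, ∑ i ∈ F' j, v i = 1 / 2 ∧ F' j = S) ∨ (∃ j ∈ C, ∑ i ∈ G j, v i = 1 ∧ G j = S) ∨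
        (∃ j ∈ Cs, B j = S) ∨ ∃ i, v i = 0 ∧ {i} = S := by
  simp only [tightClusterSets, mem_union, mem_image, mem_filter, mem_univ, true_and, or_assoc,
    and_assoc]

theorem laminar_tightClusterSets {C Cs : Finset β} {F' G B : β → Finset α} (hCs : Cs ⊆ C)
    (hFG : ∀ j ∈ C, F' j ⊆ G j) (hB : ∀ j ∈ Cs, B j ⊆ G j ∧ (F' j ⊆ B j ∨ B j ⊆ F' j))
    (hdisj : ∀ j ∈ C, ∀ j' ∈ C, j ≠ j' → Disjoint (G j) (G j')) (v : α → ℝ) :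
    ∀ S ∈ tightClusterSets C Cs F' G B v, ∀ T ∈ tightClusterSets C Cs F' G B v,
      S ⊆ T ∨ T ⊆ S ∨ Disjoint S T := by
  have hcases : ∀ S ∈ tightClusterSets C Cs F' G B v, (∃ i, S = {i}) ∨
      ∃ j ∈ C, S ⊆ G j ∧ (S = F' j ∨ S = G j ∨ (j ∈ Cs ∧ S = B j)) := by
    intro S hS
    rcases mem_tightClusterSets.1 hS with ⟨j, hj, -, rfl⟩ | ⟨j, hj, -, rfl⟩ | ⟨j, hj, rfl⟩ |
      ⟨i, -, rfl⟩
    · exact Or.inr ⟨j, hj, hFG j hj, Or.inl rfl⟩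
    · exact Or.inr ⟨j, hj, subset_rfl, Or.inr (Or.inl rfl)⟩
    · exact Or.inr ⟨j, hCs hj, (hB j hj).1, Or.inr (Or.inr ⟨hj, rfl⟩)⟩
    · exact Or.inl ⟨i, rfl⟩
  intro S hS T hT
  rcases hcases S hS with ⟨i, rfl⟩ | ⟨j, hj, hSG, hS⟩
  · by_cases hiT : i ∈ T
    · exact Or.inl (singleton_subset_iff.2 hiT)
    · exact Or.inr (Or.inr (disjoint_singleton_left.2 hiT))
  rcases hcases T hT with ⟨i, rfl⟩ | ⟨j', hj', hTG, hT⟩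
  · by_cases hiS : i ∈ S
    · exact Or.inr (Or.inl (singleton_subset_iff.2 hiS))
    · exact Or.inr (Or.inr (disjoint_singleton_right.2 hiS))
  rcases eq_or_ne j j' with rfl | hjj'
  · have hchain : ∀ {X Y : Finset α}, X = F' j ∨ (j ∈ Cs ∧ X = B j) →
        Y = F' j ∨ (j ∈ Cs ∧ Y = B j) → X ⊆ Y ∨ Y ⊆ X := by
      rintro X Y (rfl | ⟨hjs, rfl⟩) (rfl | ⟨hjs', rfl⟩)
      exacts [.inl subset_rfl, (hB j hjs').2, (hB j hjs).2.symm, .inl subset_rfl]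
    by_cases hSG' : S = G j
    · exact .inr (.inl (hSG' ▸ hTG))
    by_cases hTG' : T = G j
    · exact .inl (hTG' ▸ hSG)
    exact (hchain (by tauto) (by tauto)).imp_right .inl
  · exact Or.inr (Or.inr ((hdisj j hj j' hj' hjj').mono hSG hTG))

theorem isPiSystem_tightRankSets {rk : Finset α → ℕ}
    (hrk_submod : ∀ S T : Finset α, rk (S ∪ T) + rk (S ∩ T) ≤ rk S + rk T) {v : α → ℝ}
    (hv : ∀ S : Finset α, ∑ i ∈ S, v i ≤ (rk S : ℝ)) : (tightRankSets rk v).IsPiSystem := by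
  intro S hS T hT _
  simp only [tightRankSets, mem_filter, mem_univ, true_and] at hS hT ⊢
  have hsub : ((rk (S ∪ T) + rk (S ∩ T) : ℕ) : ℝ) ≤ rk S + rk T := by exact_mod_cast hrk_submod S T
  have := sum_union_inter (s₁ := S) (s₂ := T) (f := v)
  have := hv (S ∪ T)
  have := hv (S ∩ T)
  push_cast at hsub
  linarith

theorem natCast_mem_zmultiples_half (n : ℕ) : (n : ℝ) ∈ AddSubgroup.zmultiples (1 / 2 : ℝ) :=
  AddSubgroup.mem_zmultiples_iff.2 ⟨2 * n, by rw [zsmul_eq_mul]; push_cast; ring⟩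

theorem sum_mem_zmultiples_half {rk : Finset α → ℕ} {C Cs : Finset β} {F' G B : β → Finset α}
    {v : α → ℝ} (hv : v ∈ clusterPolytope rk C Cs F' G B) :
    ∀ S ∈ tightRankSets rk v ∪ tightClusterSets C Cs F' G B v,
      ∑ i ∈ S, v i ∈ AddSubgroup.zmultiples (1 / 2 : ℝ) := by
  intro S hS
  rcases mem_union.1 hS with hS | hS
  · simp only [tightRankSets, mem_filter, mem_univ, true_and] at hS
    exact hS ▸ natCast_mem_zmultiples_half _
  rcases mem_tightClusterSets.1 hS with ⟨j, -, hj, rfl⟩ | ⟨j, -, hj, rfl⟩ | ⟨j, hj, rfl⟩ |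
    ⟨i, hi, rfl⟩
  · rw [hj]
    exact AddSubgroup.mem_zmultiples _
  · rw [hj]
    exact_mod_cast natCast_mem_zmultiples_half 1
  · rw [hv.2.2.2 j hj]
    exact_mod_cast natCast_mem_zmultiples_half 1
  · simp [hi]

theorem eventually_add_smul_mem_clusterPolytope {rk : Finset α → ℕ} {C Cs : Finset β}
    {F' G B : β → Finset α} {v d : α → ℝ} (hv : v ∈ clusterPolytope rk C Cs F' G B)
    (hd : ∀ S ∈ tightRankSets rk v ∪ tightClusterSets C Cs F' G B v, ∑ i ∈ S, d i = 0) :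
    ∀ᶠ ε in 𝓝 (0 : ℝ), v + ε • d ∈ clusterPolytope rk C Cs F' G B := by
  obtain ⟨hv0, hvrk, hvC, hvCs⟩ := hv
  have hrk : ∀ S, ∑ i ∈ S, v i = rk S → ∑ i ∈ S, d i = 0 := fun S hS =>
    hd S (mem_union_left _ (by simp [tightRankSets, hS]))
  have hcl : ∀ S ∈ tightClusterSets C Cs F' G B v, ∑ i ∈ S, d i = 0 := fun S hS =>
    hd S (mem_union_right _ hS)
  have hsum : ∀ (ε : ℝ) (S : Finset α),
      ∑ i ∈ S, (v + ε • d) i = ∑ i ∈ S, v i + ε * ∑ i ∈ S, d i := fun ε S => by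
    simp [sum_add_distrib, mul_sum]
  simp only [clusterPolytope, Set.mem_ofPred_eq, hsum]
  refine (eventually_all.2 fun (i : α) => ?_).and ((eventually_all.2 fun (S : Finset α) => ?_).and
    (((eventually_all_finset C).2 fun j hj => ?_).and (Eventually.of_forall fun ε j hj => ?_)))
  · have hdi : v i = 0 → d i = 0 := fun h => by
      simpa using hcl {i} (mem_tightClusterSets.2 (.inr (.inr (.inr ⟨i, h, rfl⟩))))
    simpa using eventually_le_add_mul (hv0 i) hdi
  · exact eventually_add_mul_le (hvrk S) (hrk S)
  · exact (eventually_le_add_mul (hvC j hj).1 fun h =>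
      hcl _ (mem_tightClusterSets.2 (.inl ⟨j, hj, h, rfl⟩))).and
      (eventually_add_mul_le (hvC j hj).2 fun h =>
        hcl _ (mem_tightClusterSets.2 (.inr (.inl ⟨j, hj, h, rfl⟩))))
  · rw [hvCs j hj, hcl _ (mem_tightClusterSets.2 (.inr (.inr (.inl ⟨j, hj, rfl⟩)))), mul_zero,
      add_zero]

end ClusterPolytope

theorem stmt_5_general {α β : Type*} [Fintype α] [DecidableEq α]
    (rk : Finset α → ℕ)
    (hrk_submod : ∀ S T : Finset α, rk (S ∪ T) + rk (S ∩ T) ≤ rk S + rk T)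
    (C Cs : Finset β) (hCs : Cs ⊆ C)
    (F' G B : β → Finset α)
    (hFG : ∀ j ∈ C, F' j ⊆ G j)
    (hB : ∀ j ∈ Cs, B j ⊆ G j ∧ (F' j ⊆ B j ∨ B j ⊆ F' j))
    (hdisj : ∀ j ∈ C, ∀ j' ∈ C, j ≠ j' → Disjoint (G j) (G j'))
    (Q : Set (α → ℝ))
    (hQ : Q = {v : α → ℝ |
      (∀ i, 0 ≤ v i) ∧
      (∀ S : Finset α, ∑ i ∈ S, v i ≤ (rk S : ℝ)) ∧
      (∀ j ∈ C, (1 : ℝ) / 2 ≤ ∑ i ∈ F' j, v i ∧ ∑ i ∈ G j, v i ≤ 1) ∧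
      (∀ j ∈ Cs, ∑ i ∈ B j, v i = 1)})
    (v : α → ℝ) (hv : v ∈ Set.extremePoints ℝ Q) :
    ∀ i : α, ∃ n : ℤ, 2 * v i = (n : ℝ) := by
  subst hQ
  have hvQ : v ∈ clusterPolytope rk C Cs F' G B := hv.1
  obtain ⟨y, hyΛ, hy⟩ := (isPiSystem_tightRankSets hrk_submod hvQ.2.1).exists_forall_mem_sum_eq
    (AddSubgroup.zmultiples (1 / 2 : ℝ))
    (isPiSystem_of_laminar (laminar_tightClusterSets hCs hFG hB hdisj v))
    (sum_mem_zmultiples_half hvQ)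
  have hvy : v - y = 0 := eq_zero_of_mem_extremePoints_of_eventually hv
    (eventually_add_smul_mem_clusterPolytope hvQ fun S hS => by simp [sum_sub_distrib, hy S hS])
  intro i
  obtain ⟨n, hn⟩ := AddSubgroup.mem_zmultiples_iff.1 (hyΛ i)
  refine ⟨n, ?_⟩
  rw [sub_eq_zero.1 hvy, ← hn, zsmul_eq_mul]
  ring

/-- Extreme points of the auxiliary polytope `Q` are half-integral. The ground set `𝓕`
of the matroid is the finite type `α`, `rk` is the matroid rank function
(normalized, monotone, submodular), the sets `G j` for `j ∈ C` are pairwise disjoint,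
`F' j ⊆ G j`, and for `j ∈ Cs` the set `B j ⊆ G j` is comparable with `F' j`
(so the non-matroid constraints form a laminar family). -/
theorem stmt_5 {α β : Type*} [Fintype α] [DecidableEq α]
    (rk : Finset α → ℕ)
    (hrk_le_card : ∀ S : Finset α, rk S ≤ S.card)
    (hrk_mono : ∀ ⦃S T : Finset α⦄, S ⊆ T → rk S ≤ rk T)
    (hrk_submod : ∀ S T : Finset α, rk (S ∪ T) + rk (S ∩ T) ≤ rk S + rk T)
    (C Cs : Finset β) (hCs : Cs ⊆ C)
    (F' G B : β → Finset α)
    (hFG : ∀ j ∈ C, F' j ⊆ G j)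
    (hB : ∀ j ∈ Cs, B j ⊆ G j ∧ (F' j ⊆ B j ∨ B j ⊆ F' j))
    (hdisj : ∀ j ∈ C, ∀ j' ∈ C, j ≠ j' → Disjoint (G j) (G j'))
    (Q : Set (α → ℝ))
    (hQ : Q = {v : α → ℝ |
      (∀ i, 0 ≤ v i) ∧
      (∀ S : Finset α, ∑ i ∈ S, v i ≤ (rk S : ℝ)) ∧
      (∀ j ∈ C, (1 : ℝ) / 2 ≤ ∑ i ∈ F' j, v i ∧ ∑ i ∈ G j, v i ≤ 1) ∧
      (∀ j ∈ Cs, ∑ i ∈ B j, v i = 1)})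
    (v : α → ℝ) (hv : v ∈ Set.extremePoints ℝ Q) :
    ∀ i : α, ∃ n : ℤ, 2 * v i = (n : ℝ) :=
  stmt_5_general rk hrk_submod C Cs hCs F' G B hFG hB hdisj Q hQ v hv
end

section
/- Let j, j', i, i' be points of a metric space with distance d, and let λ' ≥ 0 be a real number. Suppose d(j,j') > 2·λ', d(i,j') ≤ d(i,j), and d(i',j') ≤ λ'. Set γ = d(i,j). Then d(i',j) ≤ 3·γ. -/
/-- Key reassignment distance bound: if `d(j,j') > 2·λ'`, facility `i` is at least as
close to `j'` as to `j`, and `d(i',j') ≤ λ'`, then `d(i',j) ≤ 3·d(i,j)`. -/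
theorem stmt_6 {X : Type*} [MetricSpace X] (j j' i i' : X) (lam' : ℝ)
    (hlam : 0 ≤ lam') (hsep : dist j j' > 2 * lam') (hclosest : dist i j' ≤ dist i j)
    (hi' : dist i' j' ≤ lam') :
    dist i' j ≤ 3 * dist i j := by
  have h1 : dist j j' ≤ dist j i + dist i j' := dist_triangle _ _ _
  have h2 : dist i' j ≤ dist i' j' + dist j' i + dist i j :=
    (dist_triangle4 i' j' i j).trans (by rw [dist_comm j' i])
  have hji : dist j i = dist i j := dist_comm _ _
  have hji' : dist j' i = dist i j' := dist_comm _ _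
  linarith
end

section
/- Let 𝓕 and 𝓒 be finite sets of points in a metric space with distance d and let a : 𝓒 → ℝ be nonnegative. For each j ∈ 𝓒 let G_j ⊆ 𝓕 and let γ_j ≥ 0 satisfy d(i,j) ≥ γ_j for every i ∈ 𝓕 \ G_j. Let x : 𝓕 × 𝓒 → ℝ be nonnegative with Σ_{i∈𝓕} x_{ij} ≥ 1 and Σ_{i∈G_j} x_{ij} ≤ 1 for every j, and set C̄_j = Σ_{i∈𝓕} d(i,j)·x_{ij}. Then Σ_{j∈𝓒} a_j·( 2·Σ_{i∈G_j} d(i,j)·x_{ij} + 4·γ_j·(1 − Σ_{i∈G_j} x_{ij}) ) ≤ 4·Σ_{j∈𝓒} a_j·C̄_j. -/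
/-- The proxy objective used to find a half-integral solution is at most four times the
fractional connection cost: `T(y') ≤ 4·COST'(x,y)` (connection-cost part). -/
theorem stmt_8 {X : Type*} [MetricSpace X] (𝓕 𝓒 : Finset X)
    (a : X → ℝ) (G : X → Finset X) (γ : X → ℝ) (x : X → X → ℝ)
    (ha : ∀ j ∈ 𝓒, 0 ≤ a j)
    (hG : ∀ j ∈ 𝓒, G j ⊆ 𝓕)
    (hγ : ∀ j ∈ 𝓒, 0 ≤ γ j)
    (hfar : ∀ j ∈ 𝓒, ∀ i ∈ 𝓕, i ∉ G j → γ j ≤ dist i j)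
    (hx : ∀ i ∈ 𝓕, ∀ j ∈ 𝓒, 0 ≤ x i j)
    (hcov : ∀ j ∈ 𝓒, 1 ≤ ∑ i ∈ 𝓕, x i j)
    (hGle : ∀ j ∈ 𝓒, ∑ i ∈ G j, x i j ≤ 1) :
    ∑ j ∈ 𝓒, a j * (2 * ∑ i ∈ G j, dist i j * x i j
        + 4 * γ j * (1 - ∑ i ∈ G j, x i j)) ≤
      4 * ∑ j ∈ 𝓒, a j * ∑ i ∈ 𝓕, dist i j * x i j := by
  classical
  rw [Finset.mul_sum]
  apply Finset.sum_le_sum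
  intro j hj
  have hsplit : ∑ i ∈ 𝓕, dist i j * x i j
      = ∑ i ∈ 𝓕 \ G j, dist i j * x i j + ∑ i ∈ G j, dist i j * x i j :=
    (Finset.sum_sdiff (hG j hj)).symm
  have hsplit2 : ∑ i ∈ 𝓕, x i j
      = ∑ i ∈ 𝓕 \ G j, x i j + ∑ i ∈ G j, x i j :=
    (Finset.sum_sdiff (hG j hj)).symm
  have hout : γ j * ∑ i ∈ 𝓕 \ G j, x i j ≤ ∑ i ∈ 𝓕 \ G j, dist i j * x i j := by
    classical
  rw [Finset.mul_sum]
    apply Finset.sum_le_sum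
    intro i hi
    have hi' := Finset.mem_sdiff.mp hi
    exact mul_le_mul_of_nonneg_right (hfar j hj i hi'.1 hi'.2) (hx i hi'.1 j hj)
  have hmass : 1 - ∑ i ∈ G j, x i j ≤ ∑ i ∈ 𝓕 \ G j, x i j := by
    have := hcov j hj
    rw [hsplit2] at this
    linarith
  have hSGnn : 0 ≤ ∑ i ∈ G j, dist i j * x i j := by
    apply Finset.sum_nonneg
    intro i hi
    exact mul_nonneg dist_nonneg (hx i (hG j hj hi) j hj)
  have hγj := hγ j hj
  have key : 2 * ∑ i ∈ G j, dist i j * x i j + 4 * γ j * (1 - ∑ i ∈ G j, x i j)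
      ≤ 4 * ∑ i ∈ 𝓕, dist i j * x i j := by
    rw [hsplit]
    nlinarith [mul_le_mul_of_nonneg_left hmass hγj]
  calc a j * (2 * ∑ i ∈ G j, dist i j * x i j + 4 * γ j * (1 - ∑ i ∈ G j, x i j))
      ≤ a j * (4 * ∑ i ∈ 𝓕, dist i j * x i j) :=
        mul_le_mul_of_nonneg_left key (ha j hj)
    _ = 4 * (a j * ∑ i ∈ 𝓕, dist i j * x i j) := by ring
end
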